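/- The function F₂ : ℝ³ → ℝ defined by F₂(s,λ,r) = −(1/16)·sinh(4s)·e^{−8λ} − (1/4)·(16r − s)·e^{8λ} satisfies the partial differential equation ∂³F₂/∂s²∂λ − 8·∂²F₂/∂s² − 16·∂F₂/∂λ + 128·F₂ = 0 at every point of ℝ³. -/

import Mathlib

/-- The generating function of the genus-2 Donaldson invariants of Σ₂ × ℙ¹:
    F₂(s,λ,r) = −(1/16)·sinh(4s)·e^{−8λ} − (1/4)·(16r − s)·e^{8λ}. -/
noncomputable def F₂ (s l r : ℝ) : ℝ :=
  -(1 / 16) * Real.sinh (4 * s) * Real.exp (-8 * l)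
    - (1 / 4) * (16 * r - s) * Real.exp (8 * l)

/-!
Write `F₂ = u(s)·e^{-8λ} + v(s)·e^{8λ}` with `u(s) = -sinh(4s)/16` and `v` affine in `s`.
The operator factors as `(∂ₛ² − 16)(∂_λ − 8)`: the factor `∂_λ − 8` kills the `e^{8λ}` mode and
leaves `-16·u(s)·e^{-8λ}`, which `∂ₛ² − 16` kills because `u'' = 16u`.
-/

open Real

noncomputable def expModes (k : ℝ) (u v : ℝ → ℝ) (s l : ℝ) : ℝ :=
  u s * exp (-k * l) + v s * exp (k * l)

section expModes

variable (k : ℝ) (u v : ℝ → ℝ)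

theorem hasDerivAt_expModes_snd (s l : ℝ) :
    HasDerivAt (fun l' => expModes k u v s l')
      (expModes k (fun s' => -k * u s') (fun s' => k * v s') s l) l := by
  have hneg := ((hasDerivAt_id l).const_mul (-k)).exp.const_mul (u s)
  have hpos := ((hasDerivAt_id l).const_mul k).exp.const_mul (v s)
  refine (hneg.add hpos).congr_deriv ?_
  simp only [expModes, id]
  ring

theorem deriv_expModes_snd (s l : ℝ) :
    deriv (fun l' => expModes k u v s l') l
      = expModes k (fun s' => -k * u s') (fun s' => k * v s') s l :=
  (hasDerivAt_expModes_snd k u v s l).deriv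

variable {u v}

theorem iteratedDeriv_two_expModes_fst (hu : ContDiff ℝ 2 u) (hv : ContDiff ℝ 2 v) (s l : ℝ) :
    iteratedDeriv 2 (fun s' => expModes k u v s' l) s
      = expModes k (iteratedDeriv 2 u) (iteratedDeriv 2 v) s l := by
  simp only [expModes]
  rw [iteratedDeriv_fun_add (by fun_prop) (by fun_prop), iteratedDeriv_mul_const_field,
    iteratedDeriv_mul_const_field]

theorem expModes_pde (m : ℝ) (hu : ContDiff ℝ 2 u) (hv : ContDiff ℝ 2 v)
    (hu'' : ∀ s, iteratedDeriv 2 u s = m * u s) (hv'' : ∀ s, iteratedDeriv 2 v s = 0)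
    (s l : ℝ) :
    iteratedDeriv 2 (fun s' => deriv (fun l' => expModes k u v s' l') l) s
      - k * iteratedDeriv 2 (fun s' => expModes k u v s' l) s
      - m * deriv (fun l' => expModes k u v s l') l
      + m * k * expModes k u v s l = 0 := by
  simp only [deriv_expModes_snd]
  rw [iteratedDeriv_two_expModes_fst k (contDiff_const.mul hu) (contDiff_const.mul hv),
    iteratedDeriv_two_expModes_fst k hu hv]
  simp only [expModes, iteratedDeriv_const_mul_field, hu'', hv'']
  ring

end expModes

theorem iteratedDeriv_two_sinh_const_mul (c x : ℝ) :
    iteratedDeriv 2 (fun y => sinh (c * y)) x = c ^ 2 * sinh (c * x) := by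
  rw [iteratedDeriv_comp_const_mul (by fun_prop), show iteratedDeriv 2 sinh = sinh from
    iteratedDeriv_even_sinh 1]

theorem iteratedDeriv_two_affine (a b x : ℝ) :
    iteratedDeriv 2 (fun y => a + b * y) x = 0 := by
  rw [iteratedDeriv_const_add two_pos, iteratedDeriv_const_mul_field, iteratedDeriv_fun_id]
  norm_num

/-- F₂ satisfies ∂³F₂/∂s²∂λ − 8·∂²F₂/∂s² − 16·∂F₂/∂λ + 128·F₂ = 0 everywhere
    (the relation (α² − 16)(β − 8)). -/
theorem F₂_pde_alpha_sq_sub_16_mul_beta_sub_8 (s l r : ℝ) :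
    iteratedDeriv 2 (fun s' => deriv (fun l' => F₂ s' l' r) l) s
      - 8 * iteratedDeriv 2 (fun s' => F₂ s' l r) s
      - 16 * deriv (fun l' => F₂ s l' r) l
      + 128 * F₂ s l r = 0 := by
  set u : ℝ → ℝ := fun s => -(1 / 16) * sinh (4 * s)
  set v : ℝ → ℝ := fun s => -4 * r + 1 / 4 * s
  have hF : ∀ s l, F₂ s l r = expModes 8 u v s l := fun s l => by
    simp only [F₂, expModes, u, v]
    ring
  have hu'' : ∀ s, iteratedDeriv 2 u s = 16 * u s := fun s => by
    simp only [u, iteratedDeriv_const_mul_field, iteratedDeriv_two_sinh_const_mul]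
    ring
  have hpde := expModes_pde 8 16 (by fun_prop) (by fun_prop) hu''
    (iteratedDeriv_two_affine (-4 * r) (1 / 4)) s l
  simp only [hF]
  linarith
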